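/- Let θ > 0, λ > 0, β > 0 with λθ ≠ β, η_k = θ/k, t_n = ∑_{k=1}^n η_k. Then there exists C = C(θ, λ, β) such that for all n ≥ 1: ∑_{k=1}^n η_k^{1+β} e^{−λ(t_n − t_k)} ≤ C n^{−(λθ ∧ β)}. -/

import Mathlib

/-!
Since `t_n - θ log (n + 1)` is nondecreasing, `e^{-λ(t_n - t_k)} ≤ ((k + 1)/(n + 1))^{λθ} ≤
2^{λθ} (k/n)^{λθ}`, so the sum is at most `θ^{1+β} 2^{λθ} n^{-λθ} ∑_{k ≤ n} k^{λθ-1-β}`. As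
`λθ ≠ β`, this power sum is bounded when `λθ < β` and is `O(n^{λθ-β})` when `λθ > β`.
-/

/-- `tpartial θ n = ∑_{k=1}^n θ/k`. -/
noncomputable def tpartial (θ : ℝ) (n : ℕ) : ℝ := ∑ k ∈ Finset.Icc 1 n, θ / k

open Finset Real

lemma AntitoneOn.sum_Icc_one_le_add_integral {f : ℝ → ℝ} {n : ℕ} (hn : 1 ≤ n)
    (hf : AntitoneOn f (Set.Icc 1 n)) :
    ∑ k ∈ Icc 1 n, f k ≤ f 1 + ∫ x in (1 : ℝ)..n, f x := by
  have key := AntitoneOn.sum_le_integral_Ico hn (by simpa using hf)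
  rw [sum_Ico_add' (fun k : ℕ => f k), Ico_add_one_right_eq_Icc, Nat.cast_one] at key
  rw [← insert_Icc_add_one_left_eq_Icc hn, sum_insert (by simp), Nat.cast_one]
  gcongr

section PowerSums

variable {a : ℝ}

lemma sum_Icc_rpow_le_tsum (ha : a < -1) (n : ℕ) :
    ∑ k ∈ Icc 1 n, (k : ℝ) ^ a ≤ ∑' k : ℕ, (k : ℝ) ^ a :=
  (summable_nat_rpow.2 ha).sum_le_tsum _ fun k _ => rpow_nonneg k.cast_nonneg a

lemma sum_Icc_rpow_le_of_nonpos (ha₁ : -1 < a) (ha₀ : a ≤ 0) {n : ℕ} (hn : 1 ≤ n) :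
    ∑ k ∈ Icc 1 n, (k : ℝ) ^ a ≤ (n : ℝ) ^ (a + 1) / (a + 1) := by
  have hanti : AntitoneOn (fun x : ℝ => x ^ a) (Set.Icc 1 n) :=
    (antitoneOn_rpow_Ioi_of_exponent_nonpos ha₀).mono fun x hx => zero_lt_one.trans_le hx.1
  have hint : ∫ x in (1 : ℝ)..n, x ^ a = ((n : ℝ) ^ (a + 1) - 1) / (a + 1) := by
    rw [integral_rpow (.inl ha₁), one_rpow]
  have hpos : 0 < a + 1 := by linarith
  calc ∑ k ∈ Icc 1 n, (k : ℝ) ^ a ≤ 1 + ((n : ℝ) ^ (a + 1) - 1) / (a + 1) := by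
        simpa [hint] using hanti.sum_Icc_one_le_add_integral hn
    _ ≤ (n : ℝ) ^ (a + 1) / (a + 1) := by
        rw [add_div' _ _ _ hpos.ne']
        gcongr
        linarith

lemma sum_Icc_rpow_le_of_nonneg (ha : 0 ≤ a) (n : ℕ) :
    ∑ k ∈ Icc 1 n, (k : ℝ) ^ a ≤ (n : ℝ) ^ (a + 1) := by
  calc ∑ k ∈ Icc 1 n, (k : ℝ) ^ a ≤ ∑ _k ∈ Icc 1 n, (n : ℝ) ^ a :=
        sum_le_sum fun k hk => by gcongr; exact_mod_cast (mem_Icc.1 hk).2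
    _ = (n : ℝ) ^ (a + 1) := by
        rw [sum_const, Nat.card_Icc, nsmul_eq_mul, rpow_add_one' n.cast_nonneg (by linarith)]
        push_cast
        ring

lemma exists_sum_Icc_rpow_le (ha : a ≠ -1) :
    ∃ D : ℝ, 0 < D ∧ ∀ n : ℕ, 1 ≤ n →
      ∑ k ∈ Icc 1 n, (k : ℝ) ^ a ≤ D * (n : ℝ) ^ max (a + 1) 0 := by
  rcases ha.lt_or_gt with ha₁ | ha₁
  · refine ⟨max (∑' k : ℕ, (k : ℝ) ^ a) 1, by positivity, fun n _ => ?_⟩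
    rw [max_eq_right (show a + 1 ≤ 0 by linarith), rpow_zero, mul_one]
    exact (sum_Icc_rpow_le_tsum ha₁ n).trans (le_max_left _ _)
  rw [max_eq_left (show 0 ≤ a + 1 by linarith)]
  rcases le_total a 0 with ha₀ | ha₀
  · exact ⟨1 / (a + 1), by bound, fun n hn => by
      simpa [div_eq_inv_mul] using sum_Icc_rpow_le_of_nonpos ha₁ ha₀ hn⟩
  · exact ⟨1, one_pos, fun n _ => by simpa using sum_Icc_rpow_le_of_nonneg ha₀ n⟩

end PowerSums

lemma log_add_one_sub_log_le {x : ℝ} (hx : 0 < x) : log (x + 1) - log x ≤ x⁻¹ := by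
  have h := log_le_sub_one_of_pos (div_pos (by linarith : 0 < x + 1) hx)
  rwa [log_div (by linarith) hx.ne', add_div, div_self hx.ne', add_sub_cancel_left,
    one_div] at h

section Tpartial

variable {θ : ℝ}

lemma tpartial_succ (θ : ℝ) (n : ℕ) : tpartial θ (n + 1) = tpartial θ n + θ / (n + 1) := by
  rw [tpartial, sum_Icc_succ_top (by omega), tpartial]
  push_cast
  rfl

lemma monotone_tpartial_sub_log (hθ : 0 ≤ θ) :
    Monotone fun n : ℕ => tpartial θ n - θ * log (n + 1) := by
  refine monotone_nat_of_le_succ fun n => ?_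
  have hstep := log_add_one_sub_log_le (n.cast_add_one_pos (α := ℝ))
  have : θ * (log ((n : ℝ) + 1 + 1) - log ((n : ℝ) + 1)) ≤ θ / (n + 1) := by
    rw [div_eq_mul_inv]; gcongr
  simp only [tpartial_succ, Nat.cast_succ]
  linarith

lemma exp_neg_mul_tpartial_sub_le {lam : ℝ} (hθ : 0 ≤ θ) (hlam : 0 ≤ lam) {k n : ℕ}
    (hkn : k ≤ n) :
    exp (-lam * (tpartial θ n - tpartial θ k)) ≤ (((k : ℝ) + 1) / (n + 1)) ^ (lam * θ) := by
  rw [rpow_def_of_pos (by positivity), log_div (by positivity) (by positivity), exp_le_exp]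
  have hθlog : θ * (log ((n : ℝ) + 1) - log ((k : ℝ) + 1)) ≤ tpartial θ n - tpartial θ k := by
    linarith [monotone_tpartial_sub_log hθ hkn]
  linarith [mul_le_mul_of_nonneg_left hθlog hlam]

end Tpartial

lemma div_rpow_mul_exp_neg_mul_tpartial_sub_le {θ lam : ℝ} (hθ : 0 ≤ θ) (hlam : 0 ≤ lam)
    (b : ℝ) {k n : ℕ} (hk : 1 ≤ k) (hkn : k ≤ n) :
    (θ / k) ^ b * exp (-lam * (tpartial θ n - tpartial θ k)) ≤
      θ ^ b * 2 ^ (lam * θ) * (n : ℝ) ^ (-(lam * θ)) * (k : ℝ) ^ (lam * θ - b) := by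
  have hk₀ : (0 : ℝ) < k := by exact_mod_cast hk
  have hn₀ : (0 : ℝ) < n := by exact_mod_cast hk.trans hkn
  have hratio : ((k : ℝ) + 1) / (n + 1) ≤ 2 * k / n := by
    rw [div_le_div_iff₀ (by positivity) hn₀]
    nlinarith [(Nat.one_le_cast (α := ℝ)).2 hk]
  calc (θ / k) ^ b * exp (-lam * (tpartial θ n - tpartial θ k))
      ≤ (θ / k) ^ b * (2 * k / n) ^ (lam * θ) := by
        gcongr
        exact (exp_neg_mul_tpartial_sub_le hθ hlam hkn).trans (by gcongr)
    _ = θ ^ b * 2 ^ (lam * θ) * (n : ℝ) ^ (-(lam * θ)) * (k : ℝ) ^ (lam * θ - b) := by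
        rw [div_rpow hθ hk₀.le, div_rpow (by positivity) hn₀.le, mul_rpow zero_le_two hk₀.le,
          rpow_neg hn₀.le, rpow_sub hk₀]
        field_simp

theorem weighted_exponential_sum_bound_general (θ lam β : ℝ) (hθ : 0 < θ)
    (hlam : 0 < lam) (hne : lam * θ ≠ β) :
    ∃ C : ℝ, 0 < C ∧ ∀ n : ℕ, 1 ≤ n →
      ∑ k ∈ Finset.Icc 1 n,
          (θ / k) ^ (1 + β) * Real.exp (-lam * (tpartial θ n - tpartial θ k))
        ≤ C * (n : ℝ) ^ (-(min (lam * θ) β)) := by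
  set c := lam * θ
  obtain ⟨D, hD, hsum⟩ := exists_sum_Icc_rpow_le (a := c - (1 + β)) (by contrapose! hne; linarith)
  have hexp : -c + max (c - (1 + β) + 1) 0 = -min c β := by
    rcases le_total c β with h | h
    · rw [min_eq_left h, max_eq_right (by linarith)]; ring
    · rw [min_eq_right h, max_eq_left (by linarith)]; ring
  refine ⟨θ ^ (1 + β) * 2 ^ c * D, by positivity, fun n hn => ?_⟩
  have hn₀ : (0 : ℝ) < n := by exact_mod_cast hn
  calc ∑ k ∈ Icc 1 n, (θ / k) ^ (1 + β) * exp (-lam * (tpartial θ n - tpartial θ k))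
      ≤ ∑ k ∈ Icc 1 n, θ ^ (1 + β) * 2 ^ c * (n : ℝ) ^ (-c) * (k : ℝ) ^ (c - (1 + β)) :=
        sum_le_sum fun k hk => div_rpow_mul_exp_neg_mul_tpartial_sub_le hθ.le hlam.le _
          (mem_Icc.1 hk).1 (mem_Icc.1 hk).2
    _ = θ ^ (1 + β) * 2 ^ c * (n : ℝ) ^ (-c) * ∑ k ∈ Icc 1 n, (k : ℝ) ^ (c - (1 + β)) :=
        (mul_sum ..).symm
    _ ≤ θ ^ (1 + β) * 2 ^ c * (n : ℝ) ^ (-c) * (D * (n : ℝ) ^ max (c - (1 + β) + 1) 0) := by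
        gcongr
        exact hsum n hn
    _ = θ ^ (1 + β) * 2 ^ c * D * (n : ℝ) ^ (-min c β) := by
        rw [← hexp, rpow_add hn₀]
        ring

theorem weighted_exponential_sum_bound (θ lam β : ℝ) (hθ : 0 < θ)
    (hlam : 0 < lam) (hβ : 0 < β) (hne : lam * θ ≠ β) :
    ∃ C : ℝ, 0 < C ∧ ∀ n : ℕ, 1 ≤ n →
      ∑ k ∈ Finset.Icc 1 n,
          (θ / k) ^ (1 + β) * Real.exp (-lam * (tpartial θ n - tpartial θ k))
        ≤ C * (n : ℝ) ^ (-(min (lam * θ) β)) :=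
  weighted_exponential_sum_bound_general θ lam β hθ hlam hne
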